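/- arXiv:1609.06827 — 2 statements merged into one kernel-verified Lean document; each statement's English description precedes it below -/
import Mathlib

section
/- For every natural number m ≥ 6, one has C(3m-6, 2m) · (m-2)! · (m-1)! ≤ 2^(m-6) · (m-5) · (2m-4)!. -/
open Nat

private lemma keyfac : ∀ n : ℕ,
    Nat.factorial (3*n+12) * Nat.factorial (n+4) * Nat.factorial (n+5) ≤
      2^n * (n+1) * Nat.factorial (2*n+8) * Nat.factorial (2*n+12) * Nat.factorial n := by
  have step : ∀ n : ℕ, 3 ≤ n →
      (Nat.factorial (3*n+12) * Nat.factorial (n+4) * Nat.factorial (n+5) ≤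
        2^n * (n+1) * Nat.factorial (2*n+8) * Nat.factorial (2*n+12) * Nat.factorial n) →
      Nat.factorial (3*(n+1)+12) * Nat.factorial ((n+1)+4) * Nat.factorial ((n+1)+5) ≤
        2^(n+1) * ((n+1)+1) * Nat.factorial (2*(n+1)+8) * Nat.factorial (2*(n+1)+12)
          * Nat.factorial (n+1) := by
    intro n hn ih
    have e1 : Nat.factorial (3*(n+1)+12)
        = (3*n+15)*(3*n+14)*(3*n+13) * Nat.factorial (3*n+12) := by
      have : 3*(n+1)+12 = (3*n+12) + 3 := by ring
      rw [this]
      simp [Nat.factorial_succ]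
      ring
    have e2 : Nat.factorial ((n+1)+4) = (n+5) * Nat.factorial (n+4) := by
      have : (n+1)+4 = (n+4)+1 := by ring
      rw [this, Nat.factorial_succ]
    have e3 : Nat.factorial ((n+1)+5) = (n+6) * Nat.factorial (n+5) := by
      have : (n+1)+5 = (n+5)+1 := by ring
      rw [this, Nat.factorial_succ]
    have e4 : Nat.factorial (2*(n+1)+8) = (2*n+10)*(2*n+9) * Nat.factorial (2*n+8) := by
      have : 2*(n+1)+8 = (2*n+8)+2 := by ring
      rw [this]
      simp [Nat.factorial_succ]
      ring
    have e5 : Nat.factorial (2*(n+1)+12) = (2*n+14)*(2*n+13) * Nat.factorial (2*n+12) := by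
      have : 2*(n+1)+12 = (2*n+12)+2 := by ring
      rw [this]
      simp [Nat.factorial_succ]
      ring
    have e6 : Nat.factorial (n+1) = (n+1) * Nat.factorial n := Nat.factorial_succ n
    have hc : (3*n+15)*(3*n+14)*(3*n+13)*(n+5)*(n+6)
        ≤ 2*(n+2)*((2*n+10)*(2*n+9))*((2*n+14)*(2*n+13)) := by
      obtain ⟨k, rfl⟩ : ∃ k, n = k + 3 := ⟨n - 3, by omega⟩
      have hid : (3*(k+3)+15)*(3*(k+3)+14)*(3*(k+3)+13)*((k+3)+5)*((k+3)+6)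
          + (37632 + 56176*k + 19978*k^2 + 2973*k^3 + 200*k^4 + 5*k^5)
          = 2*((k+3)+2)*((2*(k+3)+10)*(2*(k+3)+9))*((2*(k+3)+14)*(2*(k+3)+13)) := by ring
      omega
    rw [e1, e2, e3, e4, e5, e6, pow_succ]
    have h := Nat.mul_le_mul hc ih
    calc (3*n+15)*(3*n+14)*(3*n+13) * Nat.factorial (3*n+12) * ((n+5) * Nat.factorial (n+4))
          * ((n+6) * Nat.factorial (n+5))
        = ((3*n+15)*(3*n+14)*(3*n+13)*(n+5)*(n+6)) *
            (Nat.factorial (3*n+12) * Nat.factorial (n+4) * Nat.factorial (n+5)) := by ring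
      _ ≤ (2*(n+2)*((2*n+10)*(2*n+9))*((2*n+14)*(2*n+13))) *
            (2^n * (n+1) * Nat.factorial (2*n+8) * Nat.factorial (2*n+12) * Nat.factorial n) := h
      _ = 2^n * 2 * ((n+1)+1) * ((2*n+10)*(2*n+9) * Nat.factorial (2*n+8))
            * ((2*n+14)*(2*n+13) * Nat.factorial (2*n+12)) * ((n+1) * Nat.factorial n) := by
          ring
  intro n
  match n with
  | 0 => norm_num [Nat.factorial]
  | 1 => norm_num [Nat.factorial]
  | 2 => norm_num [Nat.factorial]
  | (k+3) =>
    induction k with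
    | zero => norm_num [Nat.factorial]
    | succ j ihj =>
      have := step (j+3) (by omega) ihj
      convert this using 3

theorem stmt7 (m : ℕ) (hm : 6 ≤ m) :
    Nat.choose (3 * m - 6) (2 * m) * Nat.factorial (m - 2) * Nat.factorial (m - 1) ≤
      2 ^ (m - 6) * (m - 5) * Nat.factorial (2 * m - 4) := by
  obtain ⟨n, rfl⟩ : ∃ n, m = n + 6 := ⟨m - 6, by omega⟩
  have h1 : 3 * (n+6) - 6 = 3*n+12 := by omega
  have h2 : 2 * (n+6) = 2*n+12 := by ring
  have h3 : (n+6) - 2 = n+4 := by omega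
  have h4 : (n+6) - 1 = n+5 := by omega
  have h5 : (n+6) - 6 = n := by omega
  have h6 : (n+6) - 5 = n+1 := by omega
  have h7 : 2 * (n+6) - 4 = 2*n+8 := by omega
  rw [h1, h7, h2, h3, h4, h5, h6]
  have hch : Nat.choose (3*n+12) (2*n+12) * Nat.factorial (2*n+12) * Nat.factorial n
      = Nat.factorial (3*n+12) := by
    have := Nat.choose_mul_factorial_mul_factorial (show 2*n+12 ≤ 3*n+12 by omega)
    simpa [show 3*n+12 - (2*n+12) = n by omega] using this
  have hpos : 0 < Nat.factorial (2*n+12) * Nat.factorial n :=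
    Nat.mul_pos (Nat.factorial_pos _) (Nat.factorial_pos _)
  refine Nat.le_of_mul_le_mul_right ?_ hpos
  calc Nat.choose (3*n+12) (2*n+12) * Nat.factorial (n+4) * Nat.factorial (n+5)
        * (Nat.factorial (2*n+12) * Nat.factorial n)
      = (Nat.choose (3*n+12) (2*n+12) * Nat.factorial (2*n+12) * Nat.factorial n)
        * Nat.factorial (n+4) * Nat.factorial (n+5) := by ring
    _ = Nat.factorial (3*n+12) * Nat.factorial (n+4) * Nat.factorial (n+5) := by rw [hch]
    _ ≤ 2^n * (n+1) * Nat.factorial (2*n+8) * Nat.factorial (2*n+12) * Nat.factorial n :=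
        keyfac n
    _ = 2^n * (n+1) * Nat.factorial (2*n+8) * (Nat.factorial (2*n+12) * Nat.factorial n) := by
        ring
end

section
/- Let m, a, c be integers with m ≥ 5, a ≥ 1, c ≥ 1, and 2c > a². If c·(m-3) - m + 4 = (2c - a²)·c^(m-2), then a = 1 and c = 1. -/
theorem stmt12 (m : ℕ) (a c : ℤ) (hm : 5 ≤ m) (ha : 1 ≤ a) (hc : 1 ≤ c)
    (h2c : a ^ 2 < 2 * c)
    (heq : c * ((m : ℤ) - 3) - (m : ℤ) + 4 = (2 * c - a ^ 2) * c ^ (m - 2)) :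
    a = 1 ∧ c = 1 := by
  have hm' : (5:ℤ) ≤ (m:ℤ) := by exact_mod_cast hm
  have hm2 : ((m - 2 : ℕ) : ℤ) = (m : ℤ) - 2 := by
    have h2 : 2 ≤ m := by omega
    push_cast [h2]
    omega
  have hc1 : c = 1 := by
    by_contra hne
    have hc2 : 2 ≤ c := by omega
    have h1 : 1 ≤ 2 * c - a ^ 2 := by omega
    have hpow : 1 + ((m - 2 : ℕ) : ℤ) * (c - 1) ≤ c ^ (m - 2) := by
      have := one_add_mul_le_pow (a := c - 1) (by linarith) (m - 2)
      simpa using this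
    have hpos : 0 < c ^ (m - 2) := pow_pos (by linarith) _
    have h2 : c ^ (m - 2) ≤ (2 * c - a ^ 2) * c ^ (m - 2) :=
      le_mul_of_one_le_left (le_of_lt hpos) h1
    rw [hm2] at hpow
    nlinarith [heq, hpow, h2]
  subst hc1
  have ha2 : a ^ 2 = 1 := by
    have h1 : (1:ℤ) ^ (m - 2) = 1 := one_pow _
    rw [h1] at heq
    nlinarith
  refine ⟨by nlinarith, rfl⟩
end
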